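/- Let X be a complex Banach space with dim X ≥ 3 and let A ∈ B(X) be a rank-one operator. Then the following are equivalent: (1) A is a scalar multiple of a rank-one idempotent, i.e., there exist c ∈ ℂ and P ∈ B(X) with P² = P, rank P = 1, and A = cP; (2) α(ATA) = 1 for every T ∈ B(X); (3) δ(ATA) = 1 for every T ∈ B(X). -/

import Mathlib

/-- The ascent of a bounded linear operator: the least `n : ℕ` with
`ker (T ^ n) = ker (T ^ (n+1))`, and `⊤` (i.e. `∞`) if no such `n` exists. -/
noncomputable def ascent {X : Type*} [NormedAddCommGroup X] [NormedSpace ℂ X]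
    (T : X →L[ℂ] X) : ℕ∞ :=
  sInf (Nat.cast '' {m : ℕ | LinearMap.ker ((T ^ m : X →L[ℂ] X) : X →ₗ[ℂ] X) = LinearMap.ker ((T ^ (m + 1) : X →L[ℂ] X) : X →ₗ[ℂ] X)})

/-- The descent of a bounded linear operator: the least `n : ℕ` with
`range (T ^ n) = range (T ^ (n+1))`, and `⊤` (i.e. `∞`) if no such `n` exists. -/
noncomputable def descent {X : Type*} [NormedAddCommGroup X] [NormedSpace ℂ X]
    (T : X →L[ℂ] X) : ℕ∞ :=
  sInf (Nat.cast '' {m : ℕ | LinearMap.range ((T ^ m : X →L[ℂ] X) : X →ₗ[ℂ] X) = LinearMap.range ((T ^ (m + 1) : X →L[ℂ] X) : X →ₗ[ℂ] X)})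

/-!
A rank-one `A` has the form `A x = φ(x) • u`, so `A T A = φ(T u) • A` for every `T`, and
`A * A = a • A` with `a = φ(u)`. Ascent and descent are invariant under nonzero scaling and equal
`1` at `0`; since moreover `A T A = A` for some `T`, the conditions "`α(A T A) = 1` for all `T`"
and "`δ(A T A) = 1` for all `T`" reduce to `α(A) = 1` and `δ(A) = 1`. As `ker A ≠ 0` and
`range A ≠ X` when `dim X ≥ 2`, each of these, like being a multiple of a rank-one idempotent,
says `a ≠ 0`.
-/

open LinearMap

theorem ENat.sInf_natCast_image_eq_one_iff {s : Set ℕ} :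
    sInf ((Nat.cast : ℕ → ℕ∞) '' s) = 1 ↔ 0 ∉ s ∧ 1 ∈ s := by
  constructor
  · intro h
    have h0 : 0 ∉ s := fun h0 ↦ by
      simpa [h] using sInf_le (Set.mem_image_of_mem (Nat.cast : ℕ → ℕ∞) h0)
    refine ⟨h0, by_contra fun h1 ↦ ?_⟩
    have : (2 : ℕ∞) ≤ sInf ((↑) '' s) := le_sInf <| by
      rintro _ ⟨m, hm, rfl⟩
      have : m ≠ 0 ∧ m ≠ 1 := ⟨by rintro rfl; exact h0 hm, by rintro rfl; exact h1 hm⟩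
      exact_mod_cast (by omega : 2 ≤ m)
    simp [h] at this
  · rintro ⟨h0, h1⟩
    refine le_antisymm (sInf_le ⟨1, h1, rfl⟩) (le_sInf ?_)
    rintro _ ⟨m, hm, rfl⟩
    exact_mod_cast Nat.one_le_iff_ne_zero.2 (by rintro rfl; exact h0 hm)

section RankOne

variable {K V : Type*} [Field K] [AddCommGroup V] [Module K V] [TopologicalSpace V]

namespace ContinuousLinearMap

theorem ne_zero_of_rank_range_eq_one {A : V →L[K] V}
    (hA : Module.rank K (range (A : V →ₗ[K] V)) = 1) : A ≠ 0 := by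
  rintro rfl
  simp at hA

theorem exists_mul_mul_eq_self_of_rank_range_eq_one [TopologicalSpace K] [IsTopologicalRing K]
    [ContinuousSMul K V] [SeparatingDual K V] {A : V →L[K] V}
    (hA : Module.rank K (range (A : V →ₗ[K] V)) = 1) : ∃ T : V →L[K] V, A * T * A = A := by
  obtain ⟨_, ⟨w, rfl⟩, hw, hspan⟩ := (rank_submodule_eq_one_iff _).1 hA
  obtain ⟨g, hg⟩ := SeparatingDual.exists_eq_one (R := K) hw
  refine ⟨g.smulRight w, ext fun x ↦ ?_⟩
  obtain ⟨s, hs⟩ := Submodule.mem_span_singleton.1 (hspan ⟨x, rfl⟩)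
  simp only [coe_coe] at hs hg
  simp [← hs, hg]

theorem exists_mul_mul_eq_smul_of_rank_range_le_one [ContinuousConstSMul K V] {A : V →L[K] V}
    (hA : Module.rank K (range (A : V →ₗ[K] V)) ≤ 1) (T : V →L[K] V) :
    ∃ b : K, A * T * A = b • A := by
  obtain ⟨u, hu⟩ := (rank_submodule_le_one_iff' _).1 hA
  have hAx : ∀ x, ∃ s : K, s • u = A x := fun x ↦
    Submodule.mem_span_singleton.1 (hu ⟨x, rfl⟩)
  obtain ⟨b, hb⟩ := hAx (T u)
  refine ⟨b, ext fun x ↦ ?_⟩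
  obtain ⟨s, hs⟩ := hAx x
  change A (T (A x)) = b • A x
  rw [← hs, map_smul, map_smul, ← hb, smul_comm]

theorem exists_eq_smul_idempotent_iff [IsTopologicalAddGroup V] [ContinuousConstSMul K V]
    {A : V →L[K] V} {a : K} (hAA : A * A = a • A)
    (hA : Module.rank K (range (A : V →ₗ[K] V)) = 1) :
    (∃ (c : K) (P : V →L[K] V), P * P = P ∧
      Module.rank K (range (P : V →ₗ[K] V)) = 1 ∧ A = c • P) ↔ a ≠ 0 := by
  constructor
  · rintro ⟨c, P, hP, -, rfl⟩ rfl
    have hcA : c • c • P = 0 := by rwa [smul_mul_smul_comm, hP, zero_smul, mul_smul] at hAA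
    apply ne_zero_of_rank_range_eq_one hA
    rcases smul_eq_zero.1 hcA with rfl | h
    · exact zero_smul K P
    · exact h
  · intro ha
    refine ⟨a, a⁻¹ • A, ?_, ?_, (smul_inv_smul₀ ha A).symm⟩
    · rw [smul_mul_smul_comm, hAA, smul_smul, inv_mul_cancel_right₀ ha]
    · rwa [toLinearMap_smul, range_smul _ _ (inv_ne_zero ha)]

theorem forall_apply_mul_mul_eq_apply_zero_iff [IsTopologicalAddGroup V] [TopologicalSpace K]
    [IsTopologicalRing K] [ContinuousSMul K V] [SeparatingDual K V] {α : Type*}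
    {f : (V →L[K] V) → α}
    (hf : ∀ c : K, c ≠ 0 → ∀ T, f (c • T) = f T) {A : V →L[K] V}
    (hA : Module.rank K (range (A : V →ₗ[K] V)) = 1) :
    (∀ T, f (A * T * A) = f 0) ↔ f A = f 0 := by
  refine ⟨fun h ↦ ?_, fun h T ↦ ?_⟩
  · obtain ⟨T, hT⟩ := exists_mul_mul_eq_self_of_rank_range_eq_one hA
    rw [← h T, hT]
  · obtain ⟨b, hb⟩ := exists_mul_mul_eq_smul_of_rank_range_le_one hA.le T
    rcases eq_or_ne b 0 with rfl | hb0
    · rw [hb, zero_smul]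
    · rw [hb, hf b hb0, h]

end ContinuousLinearMap

end RankOne

section AscentDescent

variable {X : Type*} [NormedAddCommGroup X] [NormedSpace ℂ X]

theorem ascent_eq_one_iff (T : X →L[ℂ] X) :
    ascent T = 1 ↔ ker (T : X →ₗ[ℂ] X) ≠ ⊥ ∧
      ker (T : X →ₗ[ℂ] X) = ker ((T * T : X →L[ℂ] X) : X →ₗ[ℂ] X) := by
  rw [ascent, ENat.sInf_natCast_image_eq_one_iff]
  simp only [Set.mem_ofPred_eq, pow_zero, zero_add, pow_one, one_add_one_eq_two, sq]
  simp [Module.End.one_eq_id, eq_comm]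

theorem descent_eq_one_iff (T : X →L[ℂ] X) :
    descent T = 1 ↔ range (T : X →ₗ[ℂ] X) ≠ ⊤ ∧
      range (T : X →ₗ[ℂ] X) = range ((T * T : X →L[ℂ] X) : X →ₗ[ℂ] X) := by
  rw [descent, ENat.sInf_natCast_image_eq_one_iff]
  simp only [Set.mem_ofPred_eq, pow_zero, zero_add, pow_one, one_add_one_eq_two, sq]
  simp [Module.End.one_eq_id, eq_comm]

theorem ascent_smul {c : ℂ} (hc : c ≠ 0) (T : X →L[ℂ] X) : ascent (c • T) = ascent T := by
  simp only [ascent, smul_pow, ContinuousLinearMap.toLinearMap_smul,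
    ker_smul _ _ (pow_ne_zero _ hc)]

theorem descent_smul {c : ℂ} (hc : c ≠ 0) (T : X →L[ℂ] X) :
    descent (c • T) = descent T := by
  simp only [descent, smul_pow, ContinuousLinearMap.toLinearMap_smul,
    range_smul _ _ (pow_ne_zero _ hc)]

theorem ascent_zero [Nontrivial X] : ascent (0 : X →L[ℂ] X) = 1 := by
  simp [ascent_eq_one_iff]

theorem descent_zero [Nontrivial X] : descent (0 : X →L[ℂ] X) = 1 := by
  simp [descent_eq_one_iff]

theorem ascent_eq_one_iff_of_mul_self_eq_smul {T : X →L[ℂ] X} {a : ℂ} (hT : T * T = a • T)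
    (hT0 : T ≠ 0) (hker : ker (T : X →ₗ[ℂ] X) ≠ ⊥) : ascent T = 1 ↔ a ≠ 0 := by
  rw [ascent_eq_one_iff, hT, and_iff_right hker]
  rcases eq_or_ne a 0 with rfl | ha
  · have : (T : X →ₗ[ℂ] X) ≠ 0 := ContinuousLinearMap.coe_injective.ne hT0
    simpa [ker_eq_top] using this
  · simp [ha, ker_smul]

theorem descent_eq_one_iff_of_mul_self_eq_smul {T : X →L[ℂ] X} {a : ℂ} (hT : T * T = a • T)
    (hT0 : T ≠ 0) (hrange : range (T : X →ₗ[ℂ] X) ≠ ⊤) : descent T = 1 ↔ a ≠ 0 := by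
  rw [descent_eq_one_iff, hT, and_iff_right hrange]
  rcases eq_or_ne a 0 with rfl | ha
  · have : (T : X →ₗ[ℂ] X) ≠ 0 := ContinuousLinearMap.coe_injective.ne hT0
    simpa [range_eq_bot] using this
  · simp [ha, range_smul]

end AscentDescent

theorem scalar_mul_rank_one_idempotent_iff_general {X : Type*} [NormedAddCommGroup X]
    [NormedSpace ℂ X] (hdim : 3 ≤ Module.rank ℂ X)
    (A : X →L[ℂ] X) (hA : Module.rank ℂ (LinearMap.range (A : X →ₗ[ℂ] X)) = 1) :
    ((∃ (c : ℂ) (P : X →L[ℂ] X), P * P = P ∧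
        Module.rank ℂ (LinearMap.range (P : X →ₗ[ℂ] X)) = 1 ∧ A = c • P) ↔
      (∀ T : X →L[ℂ] X, ascent (A * T * A) = 1)) ∧
    ((∃ (c : ℂ) (P : X →L[ℂ] X), P * P = P ∧
        Module.rank ℂ (LinearMap.range (P : X →ₗ[ℂ] X)) = 1 ∧ A = c • P) ↔
      (∀ T : X →L[ℂ] X, descent (A * T * A) = 1)) := by
  have hX : 1 < Module.rank ℂ X := lt_of_lt_of_le (by norm_num) hdim
  have : Nontrivial X := rank_pos_iff_nontrivial.1 (zero_lt_one.trans hX)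
  have hrank : Module.rank ℂ (range (A : X →ₗ[ℂ] X)) < Module.rank ℂ X := hA ▸ hX
  have hA0 := ContinuousLinearMap.ne_zero_of_rank_range_eq_one hA
  have hker : ker (A : X →ₗ[ℂ] X) ≠ ⊥ := fun h ↦
    hrank.ne (rank_range_of_injective _ (ker_eq_bot.1 h))
  have hrange : range (A : X →ₗ[ℂ] X) ≠ ⊤ := fun h ↦ hrank.ne (by rw [h, rank_top])
  obtain ⟨a, hAA⟩ := ContinuousLinearMap.exists_mul_mul_eq_smul_of_rank_range_le_one hA.le 1
  rw [mul_one] at hAA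
  have hascent := ContinuousLinearMap.forall_apply_mul_mul_eq_apply_zero_iff
    (fun _ hc T ↦ ascent_smul hc T) hA
  have hdescent := ContinuousLinearMap.forall_apply_mul_mul_eq_apply_zero_iff
    (fun _ hc T ↦ descent_smul hc T) hA
  rw [ascent_zero] at hascent
  rw [descent_zero] at hdescent
  rw [ContinuousLinearMap.exists_eq_smul_idempotent_iff hAA hA, hascent, hdescent,
    ascent_eq_one_iff_of_mul_self_eq_smul hAA hA0 hker,
    descent_eq_one_iff_of_mul_self_eq_smul hAA hA0 hrange]
  exact ⟨Iff.rfl, Iff.rfl⟩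

theorem scalar_mul_rank_one_idempotent_iff {X : Type*} [NormedAddCommGroup X]
    [NormedSpace ℂ X] [CompleteSpace X] (hdim : 3 ≤ Module.rank ℂ X)
    (A : X →L[ℂ] X) (hA : Module.rank ℂ (LinearMap.range (A : X →ₗ[ℂ] X)) = 1) :
    ((∃ (c : ℂ) (P : X →L[ℂ] X), P * P = P ∧
        Module.rank ℂ (LinearMap.range (P : X →ₗ[ℂ] X)) = 1 ∧ A = c • P) ↔
      (∀ T : X →L[ℂ] X, ascent (A * T * A) = 1)) ∧
    ((∃ (c : ℂ) (P : X →L[ℂ] X), P * P = P ∧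
        Module.rank ℂ (LinearMap.range (P : X →ₗ[ℂ] X)) = 1 ∧ A = c • P) ↔
      (∀ T : X →L[ℂ] X, descent (A * T * A) = 1)) :=
  scalar_mul_rank_one_idempotent_iff_general hdim A hA
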